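/- arXiv:1909.01216 — 3 statements merged into one kernel-verified Lean document; each statement's English description precedes it below -/
import Mathlib

section
/- Roll-up functions compose: if ℓ → ℓ' → ℓ'' are consecutive (or transitively related) levels in a hierarchy H of a sound dimension instance, then for every element a of dom(D.ℓ), ρ_{ℓ→ℓ''}(a) = ρ_{ℓ'→ℓ''}(ρ_{ℓ→ℓ'}(a)). -/
/-!
Every element below the top level has exactly one parent, so the parent relation is right-unique
and the ancestors of `a` form a single chain. Levels strictly increase along that chain, hence it
meets each level at most once; since `a` reaches `c` through `b`, `c` is that one ancestor.
-/

namespace Relation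

variable {α β : Type*} {r : α → α → Prop}

theorem rightUnique_of_existsUnique (h : ∀ a b, r a b → ∃! b', r a b') : Relator.RightUnique r :=
  fun _ _ _ hab hac => (h _ _ hab).unique hab hac

theorem TransGen.lt_of_rel_lt {f : α → β} [Preorder β] (hmono : ∀ a b, r a b → f a < f b)
    {a b : α} (hab : TransGen r a b) : f a < f b := by
  simpa only [transGen_eq_self] using TransGen.lift f hmono a b hab

theorem ReflTransGen.eq_of_apply_eq {f : α → β} [Preorder β] (hmono : ∀ a b, r a b → f a < f b)
    {a b : α} (hab : ReflTransGen r a b) (hf : f a = f b) : a = b := by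
  rcases reflTransGen_iff_eq_or_transGen.mp hab with rfl | hab
  · rfl
  · exact absurd hf (hab.lt_of_rel_lt hmono).ne

theorem ReflTransGen.eq_of_rightUnique_of_apply_eq {f : α → β} [Preorder β]
    (hU : Relator.RightUnique r) (hmono : ∀ a b, r a b → f a < f b) {a b c : α}
    (hab : ReflTransGen r a b) (hac : ReflTransGen r a c) (hf : f b = f c) : b = c := by
  rcases hab.total_of_right_unique hU hac with hbc | hcb
  · exact hbc.eq_of_apply_eq hmono hf
  · exact (hcb.eq_of_apply_eq hmono hf.symm).symm

end Relation

/-- Roll-up functions compose: in a sound dimension instance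
(levels indexed by naturals, edges from each level to the next, unique parent
below the top), if `a` rolls up to `b` at level `ℓ'` and `b` rolls up to `c`
at level `ℓ''`, then `c` is exactly the (unique) element at level `ℓ''` to
which `a` rolls up; i.e. `ρ_{ℓ→ℓ''}(a) = ρ_{ℓ'→ℓ''}(ρ_{ℓ→ℓ'}(a))`. -/
theorem rollup_composes {α : Type} (edge : α → α → Prop)
    (level : α → ℕ) (top : ℕ)
    (hstep : ∀ a b, edge a b → level b = level a + 1)
    (hbound : ∀ a, level a ≤ top)
    (hsound : ∀ a, level a < top → ∃! b, edge a b) :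
    ∀ (a b c : α) (ℓ' ℓ'' : ℕ),
      Relation.TransGen edge a b → level b = ℓ' →
      Relation.TransGen edge b c → level c = ℓ'' →
      (Relation.TransGen edge a c ∧
        ∀ c', Relation.TransGen edge a c' → level c' = ℓ'' → c' = c) := by
  intro a b c ℓ' ℓ'' hab _ hbc hc
  have hmono : ∀ a b, edge a b → level a < level b := fun a b h => by
    simp [hstep a b h]
  have hU : Relator.RightUnique edge := Relation.rightUnique_of_existsUnique fun a b h =>
    hsound a ((hmono a b h).trans_le (hbound b))
  have hac := hab.trans hbc
  refine ⟨hac, fun c' hac' hc' => ?_⟩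
  exact hac'.to_reflTransGen.eq_of_rightUnique_of_apply_eq hU hmono hac.to_reflTransGen
    (hc'.trans hc.symm)
end

section
/- The classical cube Roll-Up operation is simulated by graphoid operations on the star-graphoid: for any data cube C over dimensions D_1,...,D_d with a single measure μ and aggregate function F, and any level ℓ_c of dimension D_c, the star-graphoid of the rolled-up cube Roll-Up(C, D_c.ℓ_c; μ, F) equals (up to identifier choice) the graphoid Aggr(Minimize(Climb(Star(C), #D_c, D_c.(Bottom→ℓ_c))), #e_μ, μ, F). -/
open scoped Classical

/-- The star-representation of a data cube: an (identifier-free) graphoid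
whose hyperedges have an empty source set; each edge is recorded by its
target node set (a set of (dimension, value) nodes) together with its measure
label. -/
structure StarGraphoid (ι V M : Type) where
  edges : Multiset (Finset (ι × V) × M)

variable {ι V M : Type} [Fintype ι] [Fintype V] [DecidableEq ι] [DecidableEq V]

/-- The target node set of the star hyperedge of a cell with coordinates `a`:
one node `(i, a i)` per dimension `i`. -/
noncomputable def targetSet (a : ι → V) : Finset (ι × V) :=
  Finset.univ.image (fun i => (i, a i))

/-- The star-graphoid `Star(C)` of a data cube `C` (a partial function from
coordinates to measure values): one hyperedge per cell of the cube. -/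
noncomputable def StarOf (C : (ι → V) → Option M) : StarGraphoid ι V M :=
  ⟨(Finset.univ : Finset (ι → V)).val.filterMap
    (fun a => (C a).map (fun m => (targetSet a, m)))⟩

/-- Climb the dimension `c` from Bottom to the level given by the roll-up
function `ρ`, in all nodes of type `#D_c`; since nodes of the star-graphoid
are identified by their (dimension, value) labels, nodes with equal climbed
labels are identified, so this also performs the minimization. -/
noncomputable def ClimbStar (G : StarGraphoid ι V M) (c : ι) (ρ : V → V) :
    StarGraphoid ι V M :=
  ⟨G.edges.map (fun e =>
    (e.1.image (fun p => (p.1, if p.1 = c then ρ p.2 else p.2)), e.2))⟩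

/-- Aggregate: replace all parallel hyperedges with identical target sets by
a single hyperedge whose measure is `F` of the multiset of their measures. -/
noncomputable def AggrStar (G : StarGraphoid ι V M) (F : Multiset M → M) :
    StarGraphoid ι V M :=
  ⟨((G.edges.map Prod.fst).toFinset.val).map (fun S =>
    (S, F ((G.edges.filter (fun e => e.1 = S)).map Prod.snd)))⟩

/-- The classical cube roll-up `Roll-Up(C, D_c.ℓ_c; μ, F)`: cells whose
`D_c`-coordinates roll up (via `ρ`) to the same value and agree on all other
coordinates are replaced by a single cell with the aggregated measure. -/
noncomputable def RollUpCube (C : (ι → V) → Option M) (c : ι) (ρ : V → V)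
    (F : Multiset M → M) : (ι → V) → Option M := fun a' =>
  let grp : Multiset M :=
    (Finset.univ : Finset (ι → V)).val.filterMap
      (fun a => if (∀ i, i ≠ c → a i = a' i) ∧ ρ (a c) = a' c then C a else none)
  if grp = 0 then none else some (F grp)

/-! Climbing sends the star hyperedge of a cell `a` to the hyperedge with target set
`targetSet a'`, where `a'` is `a` with its `c`-coordinate rolled up. Since a target set
determines its coordinates, the parallel hyperedges merged by `Aggr` over `targetSet a'` are
exactly those coming from the roll-up group of `a'`, so both sides consist of the edges
`(targetSet a', F group)` for the `a'` with nonempty group. -/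

section

variable {ι V M α β : Type} [DecidableEq ι] [DecidableEq V] [Fintype α] [DecidableEq β]

noncomputable def fiberMeasures (C : α → Option M) (k : α → β) (b : β) : Multiset M :=
  Finset.univ.val.filterMap fun a => if k a = b then C a else none

lemma fiberMeasures_ne_zero_iff {C : α → Option M} {k : α → β} {b : β} :
    fiberMeasures C k b ≠ 0 ↔ ∃ a m, k a = b ∧ C a = some m := by
  simp only [fiberMeasures, ne_eq, Multiset.eq_zero_iff_forall_notMem, not_forall, not_not,
    Multiset.mem_filterMap, Finset.mem_val, Finset.mem_univ, true_and, ite_eq_iff]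
  aesop

lemma map_snd_filter_fst_eq_fiberMeasures (C : α → Option M) (k : α → β)
    {t : β → Finset (ι × V)} (ht : Function.Injective t) (b : β) :
    (((Finset.univ.val.filterMap fun a => (C a).map (t (k a), ·)).filter
      (·.1 = t b)).map Prod.snd) = fiberMeasures C k b := by
  rw [Multiset.filter_filterMap, Multiset.map_filterMap, fiberMeasures]
  congr 1
  funext a
  cases C a <;> by_cases hk : k a = b <;> simp [Option.filter, hk, ht.eq_iff]

lemma toFinset_map_fst_eq_image [Fintype β] (C : α → Option M) (k : α → β)
    (t : β → Finset (ι × V)) :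
    ((Finset.univ.val.filterMap fun a => (C a).map (t (k a), ·)).map Prod.fst).toFinset =
      (Finset.univ.filter fun b => fiberMeasures C k b ≠ 0).image t := by
  ext S : 1
  simp only [Multiset.map_filterMap, Multiset.mem_toFinset, Multiset.mem_filterMap,
    Finset.mem_image, Finset.mem_filter, fiberMeasures_ne_zero_iff]
  aesop

lemma aggrStar_eq_map_fiberMeasures [Fintype β] (C : α → Option M) (k : α → β)
    {t : β → Finset (ι × V)} (ht : Function.Injective t) (F : Multiset M → M) :
    AggrStar ⟨Finset.univ.val.filterMap fun a => (C a).map (t (k a), ·)⟩ F =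
      ⟨((Finset.univ.filter fun b => fiberMeasures C k b ≠ 0).val.map
        fun b => (t b, F (fiberMeasures C k b)))⟩ := by
  rw [AggrStar, toFinset_map_fst_eq_image, Finset.image_val_of_injOn ht.injOn, Multiset.map_map]
  simp only [Function.comp_def, map_snd_filter_fst_eq_fiberMeasures C k ht]

lemma targetSet_injective [Fintype ι] :
    Function.Injective (targetSet (ι := ι) (V := V)) := by
  intro a b h
  funext i
  have hi : (i, a i) ∈ targetSet b := h ▸ Finset.mem_image_of_mem _ (Finset.mem_univ i)
  obtain ⟨j, -, hj⟩ := Finset.mem_image.mp hi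
  obtain ⟨rfl, hba⟩ := Prod.mk.inj hj
  exact hba.symm

noncomputable def climbCoord (c : ι) (ρ : V → V) (a : ι → V) : ι → V :=
  Function.update a c (ρ (a c))

lemma image_climb_targetSet [Fintype ι] (c : ι) (ρ : V → V) (a : ι → V) :
    (targetSet a).image (fun p => (p.1, if p.1 = c then ρ p.2 else p.2)) =
      targetSet (climbCoord c ρ a) := by
  simp only [targetSet, Finset.image_image, climbCoord]
  congr 1
  funext i
  by_cases hi : i = c <;> simp [hi]

end

lemma climbStar_starOf (C : (ι → V) → Option M) (c : ι) (ρ : V → V) :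
    ClimbStar (StarOf C) c ρ =
      ⟨Finset.univ.val.filterMap fun a => (C a).map (targetSet (climbCoord c ρ a), ·)⟩ := by
  simp only [ClimbStar, StarOf, Multiset.map_filterMap, Option.map_map, Function.comp_def,
    image_climb_targetSet]

lemma rollUpCube_apply (C : (ι → V) → Option M) (c : ι) (ρ : V → V) (F : Multiset M → M)
    (a' : ι → V) :
    RollUpCube C c ρ F a' =
      if fiberMeasures C (climbCoord c ρ) a' = 0 then none
      else some (F (fiberMeasures C (climbCoord c ρ) a')) := by
  have hfiber : ∀ a, climbCoord c ρ a = a' ↔ (∀ i, i ≠ c → a i = a' i) ∧ ρ (a c) = a' c := by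
    intro a
    rw [climbCoord, Function.update_eq_iff, and_comm]
  simp only [RollUpCube, fiberMeasures, hfiber]

lemma starOf_rollUpCube (C : (ι → V) → Option M) (c : ι) (ρ : V → V) (F : Multiset M → M) :
    StarOf (RollUpCube C c ρ F) =
      ⟨(Finset.univ.filter fun a' => fiberMeasures C (climbCoord c ρ) a' ≠ 0).val.map
        fun a' => (targetSet a', F (fiberMeasures C (climbCoord c ρ) a'))⟩ := by
  simp only [StarOf, rollUpCube_apply, Finset.filter_val, Multiset.map_filter_eq_filterMap]
  congr 2
  funext a'
  split_ifs <;> simp_all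

/-- The classical cube Roll-Up is simulated by the graphoid
operations on the star-graphoid:
`Star(Roll-Up(C, D_c.ℓ_c; μ, F)) = Aggr(Minimize(Climb(Star(C), #D_c, ρ)), #e_μ, μ, F)`
(identifier-free, i.e. up to identifier choice). -/
theorem cube_rollup_simulated (C : (ι → V) → Option M) (c : ι) (ρ : V → V)
    (F : Multiset M → M) :
    StarOf (RollUpCube C c ρ F) = AggrStar (ClimbStar (StarOf C) c ρ) F := by
  rw [starOf_rollUpCube, climbStar_starOf,
    aggrStar_eq_map_fiberMeasures C _ targetSet_injective]
end

section
/- The classical cube Slice operation is simulated by graphoid operations: for a data cube C with measure μ and aggregate function F, the star-graphoid of Slice(C, D_s; μ, F) equals n-Delete(Roll-Up(Star(C), #D_s, D_s.(Bottom→All); #e_μ, μ, F), #D_s). -/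
open scoped Classical

variable {ι V M : Type} [Fintype ι] [Fintype V] [DecidableEq ι] [DecidableEq V]

/-- `n-Delete`: remove all nodes of type `#D_s` (those whose first component
is `s`) from the source and target sets of every hyperedge, keeping edge
labels. -/
noncomputable def nDeleteStar (G : StarGraphoid ι V M) (s : ι) :
    StarGraphoid ι V M :=
  ⟨G.edges.map (fun e => (e.1.filter (fun p => p.1 ≠ s), e.2))⟩

/-- The star-graphoid of a cube over the remaining dimensions `{i // i ≠ s}`
(after slicing out dimension `s`). -/
noncomputable def StarSub (s : ι)
    (C' : ({i : ι // i ≠ s} → V) → Option M) : StarGraphoid ι V M :=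
  ⟨(Finset.univ : Finset ({i : ι // i ≠ s} → V)).val.filterMap
    (fun a => (C' a).map (fun m =>
      (Finset.univ.image (fun i : {i : ι // i ≠ s} => ((i : ι), a i)), m)))⟩

/-- The classical cube Slice: drop dimension `s`, merging cells that agree on
all other coordinates and aggregating their measures with `F`. -/
noncomputable def SliceCube (C : (ι → V) → Option M) (s : ι)
    (F : Multiset M → M) : ({i : ι // i ≠ s} → V) → Option M := fun a' =>
  let grp : Multiset M :=
    (Finset.univ : Finset (ι → V)).val.filterMap
      (fun a => if ∀ i : {i : ι // i ≠ s}, a (i : ι) = a' i then C a else none)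
  if grp = 0 then none else some (F grp)

/-! Climbing `D_s` to `All` turns the target set of the star edge of a cell `a` into
`{(s, all)} ∪ T(a')`, where `a'` is the restriction of `a` away from `s` and `T(a')` is the target
set of the sliced cell `a'`. This is an injective function of `a'`, so aggregating parallel edges
groups the cells exactly as Slice does, and deleting the node `(s, all)` leaves `T(a')`. -/

open Function

section Star

variable {α β : Type} [Fintype α] [Fintype β]

noncomputable def starEdges (C : α → Option M) (key : α → Finset (ι × V)) :
    Multiset (Finset (ι × V) × M) :=
  Finset.univ.val.filterMap fun a => (C a).map fun m => (key a, m)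

noncomputable def groupMeasures (C : α → Option M) (k : α → β) (b : β) : Multiset M :=
  Finset.univ.val.filterMap fun a => if k a = b then C a else none

noncomputable def rollUpCube (C : α → Option M) (k : α → β) (F : Multiset M → M) :
    β → Option M :=
  fun b => if groupMeasures C k b = 0 then none else some (F (groupMeasures C k b))

theorem starOf_edges (C : (ι → V) → Option M) : (StarOf C).edges = starEdges C targetSet := rfl

omit [Fintype ι] [Fintype V] [DecidableEq ι] [DecidableEq V] in
theorem starEdges_map_fst (C : α → Option M) (key : α → Finset (ι × V))
    (g : Finset (ι × V) → Finset (ι × V)) :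
    (starEdges C key).map (fun e => (g e.1, e.2)) = starEdges C (g ∘ key) := by
  rw [starEdges, Multiset.map_filterMap]
  simp only [Option.map_map]
  rfl

omit [Fintype β] in
theorem groupMeasures_ne_zero_iff {C : α → Option M} {k : α → β} {b : β} :
    groupMeasures C k b ≠ 0 ↔ ∃ a, k a = b ∧ ∃ m, C a = some m := by
  simp [groupMeasures, Multiset.eq_zero_iff_forall_notMem, ← exists_and_left,
    exists_comm (α := M)]

omit [Fintype ι] [Fintype V] in
theorem starEdges_keys {K : β → Finset (ι × V)} (C : α → Option M) (k : α → β) :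
    ((starEdges C (K ∘ k)).map Prod.fst).toFinset
      = (Finset.univ.filter fun b => groupMeasures C k b ≠ 0).image K := by
  ext S
  simp [starEdges, groupMeasures_ne_zero_iff, ← exists_and_right, exists_comm (α := M)]

omit [Fintype ι] [Fintype V] [Fintype β] in
theorem starEdges_measures {K : β → Finset (ι × V)} (hK : Injective K) (C : α → Option M)
    (k : α → β) (b : β) :
    ((starEdges C (K ∘ k)).filter (fun e => e.1 = K b)).map Prod.snd = groupMeasures C k b := by
  rw [starEdges, Multiset.filter_filterMap, Multiset.map_filterMap, groupMeasures]
  congr 1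
  funext a
  cases C a <;> by_cases h : k a = b <;> simp [h, hK.eq_iff]

omit [Fintype ι] [Fintype V] in
theorem aggrStar_starEdges_comp {K : β → Finset (ι × V)} (hK : Injective K)
    (C : α → Option M) (k : α → β) (F : Multiset M → M) :
    (AggrStar ⟨starEdges C (K ∘ k)⟩ F).edges = starEdges (rollUpCube C k F) K := by
  rw [AggrStar]
  dsimp only
  rw [starEdges_keys, Finset.image_val_of_injOn hK.injOn, Multiset.map_map]
  simp only [comp_apply, starEdges_measures hK]
  rw [Finset.filter_val, Multiset.map_filter_eq_filterMap, starEdges]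
  congr 1
  funext b
  by_cases h : groupMeasures C k b = 0 <;> simp [rollUpCube, h]

end Star

section Slice

variable (s : ι)

def restrictAway (a : ι → V) : {i // i ≠ s} → V := fun i => a i

noncomputable def targetSetAway (a' : {i // i ≠ s} → V) : Finset (ι × V) :=
  Finset.univ.image fun i : {i // i ≠ s} => ((i : ι), a' i)

omit [Fintype V] in
theorem mem_targetSetAway {a' : {i // i ≠ s} → V} {j : ι} {v : V} :
    (j, v) ∈ targetSetAway s a' ↔ ∃ h : j ≠ s, a' ⟨j, h⟩ = v := by
  simp [targetSetAway]

omit [Fintype V] in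
theorem targetSetAway_injective : Injective (targetSetAway (V := V) s) := by
  intro a' b' h
  funext i
  obtain ⟨_, hb⟩ := (mem_targetSetAway s).mp (h ▸ (mem_targetSetAway s).mpr ⟨i.2, rfl⟩)
  exact hb.symm

omit [Fintype V] in
theorem filter_ne_insert_targetSetAway (v : V) (a' : {i // i ≠ s} → V) :
    (insert (s, v) (targetSetAway s a')).filter (fun p => p.1 ≠ s) = targetSetAway s a' := by
  rw [Finset.filter_insert, if_neg (not_not_intro rfl), Finset.filter_true_of_mem]
  rintro ⟨j, w⟩ hjw
  exact ((mem_targetSetAway s).mp hjw).1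

omit [Fintype V] in
theorem insert_targetSetAway_injective (v : V) :
    Injective fun a' : {i // i ≠ s} → V => insert (s, v) (targetSetAway s a') := by
  refine Injective.of_comp (f := fun S => S.filter fun p => p.1 ≠ s) ?_
  simpa only [comp_def, filter_ne_insert_targetSetAway] using targetSetAway_injective s

omit [Fintype V] in
theorem image_targetSet_climb_const (v : V) (a : ι → V) :
    (targetSet a).image (fun p => (p.1, if p.1 = s then v else p.2))
      = insert (s, v) (targetSetAway s (restrictAway s a)) := by
  ext ⟨j, w⟩
  by_cases hj : j = s
  · simp [targetSet, mem_targetSetAway, hj, eq_comm]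
  · simp [targetSet, mem_targetSetAway, restrictAway, hj]

theorem sliceCube_eq_rollUpCube (C : (ι → V) → Option M) (F : Multiset M → M) :
    SliceCube C s F = rollUpCube C (restrictAway s) F := by
  funext a'
  simp only [SliceCube, rollUpCube, groupMeasures, funext_iff]
  rfl

end Slice

/-- The classical cube Slice is simulated by graphoid
operations: `Star(Slice(C, D_s; μ, F))` equals
`n-Delete(Roll-Up(Star(C), #D_s, D_s.(Bottom→All); #e_μ, μ, F), #D_s)`, where
the graphoid Roll-Up is `Aggr ∘ Minimize ∘ Climb` and climbing `D_s` to the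
level `All` sends every value of `dom(D_s)` to the single value `all`. -/
theorem cube_slice_simulated (C : (ι → V) → Option M) (s : ι) (allv : V)
    (F : Multiset M → M) :
    StarSub s (SliceCube C s F)
      = nDeleteStar (AggrStar (ClimbStar (StarOf C) s (fun _ => allv)) F) s := by
  have hclimb : ClimbStar (StarOf C) s (fun _ => allv)
      = ⟨starEdges C
          ((fun a' => insert (s, allv) (targetSetAway s a')) ∘ restrictAway s)⟩ := by
    rw [ClimbStar, starOf_edges, starEdges_map_fst]
    congr 2
    funext a
    exact image_targetSet_climb_const s allv a
  rw [nDeleteStar, hclimb, aggrStar_starEdges_comp (insert_targetSetAway_injective s allv),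
    starEdges_map_fst, sliceCube_eq_rollUpCube]
  simp only [comp_def, filter_ne_insert_targetSetAway]
  rfl
end
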